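/- arXiv:2401.17850 — 3 statements merged into one kernel-verified Lean document; each statement's English description precedes it below -/
import Mathlib

section
/- Let n ≥ 1, m ≥ 1 be integers and c ∈ ℂ with c ≠ 0. For g := X₂² + X₃^{n+1} + c·X₁^m ∈ MvPolynomial (Fin 3) ℂ (the blow-A_n model of blow-order m), the Milnor algebra MvPolynomial (Fin 3) ℂ / J(g) is a ℂ-vector space of dimension n·(m−1). -/
/-! The partial derivatives of `X₂² + X₃^{n+1} + c X₁^m` are nonzero scalar multiples of
`X₁^{m-1}`, `X₂` and `X₃^n`, so the Jacobian ideal is a monomial ideal. Modulo a monomial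
ideal the monomials outside it form a basis; here these are `X₁^i X₃^j` with `i < m - 1` and
`j < n` (none when `m = 1`: then `X₁^0 = 1` lies in the ideal). -/

open MvPolynomial

/-- The Jacobian ideal of `g`, generated by its partial derivatives. -/
noncomputable def jacobianIdeal (g : MvPolynomial (Fin 3) ℂ) :
    Ideal (MvPolynomial (Fin 3) ℂ) :=
  Ideal.span (Set.range fun i : Fin 3 => pderiv i g)

namespace MvPolynomial

variable {σ R : Type*}

section CommSemiring

variable [CommSemiring R]

lemma restrictSupport_sup_restrictSupport (s t : Set (σ →₀ ℕ)) :
    restrictSupport R s ⊔ restrictSupport R t = restrictSupport R (s ∪ t) := by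
  simp only [restrictSupport_eq_span, Set.image_union, Submodule.span_union]

lemma isCompl_restrictSupport_compl (s : Set (σ →₀ ℕ)) :
    IsCompl (restrictSupport R s) (restrictSupport R sᶜ) := by
  refine ⟨Submodule.disjoint_def.mpr fun p hs hsc => ?_, codisjoint_iff.mpr ?_⟩
  · rw [mem_restrictSupport_iff] at hs hsc
    rw [← support_eq_empty, ← Finset.coe_eq_empty]
    exact Set.subset_empty_iff.mp fun d hd => hsc hd (hs hd)
  · rw [restrictSupport_sup_restrictSupport, Set.union_compl_self, restrictSupport_univ]

lemma restrictScalars_span_monomial_image (s : Set (σ →₀ ℕ)) :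
    (Ideal.span ((monomial · (1 : R)) '' s)).restrictScalars R =
      restrictSupport R (upperClosure s) := by
  ext p
  rw [Submodule.restrictScalars_mem, mem_ideal_span_monomial_image, mem_restrictSupport_iff]
  simp only [Set.subset_def, SetLike.mem_coe, mem_upperClosure]

end CommSemiring

variable [CommRing R]

noncomputable def basisQuotientSpanMonomialImage (s : Set (σ →₀ ℕ)) :
    Module.Basis ((upperClosure s : Set (σ →₀ ℕ))ᶜ : Set (σ →₀ ℕ)) R
      (MvPolynomial σ R ⧸ Ideal.span ((monomial · (1 : R)) '' s)) :=
  (basisRestrictSupport R _).map <|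
    ((Submodule.quotientEquivOfIsCompl _ _ (isCompl_restrictSupport_compl _)).symm.trans
      (Submodule.quotEquivOfEq _ _ (restrictScalars_span_monomial_image s).symm)).trans
      (Submodule.Quotient.restrictScalarsEquiv R _)

lemma notMem_upperClosure_range_single {a : σ → ℕ} {d : σ →₀ ℕ} :
    d ∉ upperClosure (Set.range fun i => Finsupp.single i (a i)) ↔ ∀ i, d i < a i := by
  simp [mem_upperClosure, Finsupp.single_le_iff]

noncomputable def upperClosureRangeSingleComplEquiv [Finite σ] (a : σ → ℕ) :
    ((upperClosure (Set.range fun i => Finsupp.single i (a i)) : Set (σ →₀ ℕ))ᶜ : Set _) ≃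
      ∀ i, Fin (a i) where
  toFun d i := ⟨d.1 i, notMem_upperClosure_range_single.mp d.2 i⟩
  invFun f := ⟨Finsupp.equivFunOnFinite.symm fun i => f i,
    notMem_upperClosure_range_single.mpr fun i => (f i).2⟩
  left_inv d := by ext; simp
  right_inv f := by ext; simp

lemma span_range_X_pow (a : σ → ℕ) :
    Ideal.span (Set.range fun i => (X i ^ a i : MvPolynomial σ R)) =
      Ideal.span ((monomial · (1 : R)) '' Set.range fun i => Finsupp.single i (a i)) := by
  simp only [← Set.range_comp, Function.comp_def, X_pow_eq_monomial]

noncomputable def basisQuotientSpanXPow [Finite σ] (a : σ → ℕ) :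
    Module.Basis (∀ i, Fin (a i)) R
      (MvPolynomial σ R ⧸ Ideal.span (Set.range fun i => (X i ^ a i : MvPolynomial σ R))) :=
  ((basisQuotientSpanMonomialImage _).reindex (upperClosureRangeSingleComplEquiv a)).map
    (Ideal.quotientEquivAlgOfEq R (span_range_X_pow a).symm).toLinearEquiv

lemma finrank_quotient_span_X_pow [Nontrivial R] [Fintype σ] (a : σ → ℕ) :
    Module.finrank R
      (MvPolynomial σ R ⧸ Ideal.span (Set.range fun i => (X i ^ a i : MvPolynomial σ R))) =
      ∏ i, a i := by
  simp [Module.finrank_eq_nat_card_basis (basisQuotientSpanXPow a), Nat.card_pi]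

end MvPolynomial

lemma Ideal.span_range_mul_of_isUnit {ι R : Type*} [CommSemiring R] {u f : ι → R}
    (hu : ∀ i, IsUnit (u i)) :
    Ideal.span (Set.range fun i => u i * f i) = Ideal.span (Set.range f) := by
  refine le_antisymm (Ideal.span_le.mpr ?_) (Ideal.span_le.mpr ?_) <;> rintro _ ⟨i, rfl⟩
  · exact Ideal.mul_mem_left _ _ (Ideal.subset_span ⟨i, rfl⟩)
  · exact (Ideal.unit_mul_mem_iff_mem _ (hu i)).mp (Ideal.subset_span ⟨i, rfl⟩)

lemma pderiv_blowAn {R : Type*} [CommSemiring R] (n m : ℕ) (c : R) (i : Fin 3) :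
    pderiv i (X 1 ^ 2 + X 2 ^ (n + 1) + C c * X 0 ^ m : MvPolynomial (Fin 3) R) =
      C (![c * m, 2, n + 1] i) * X i ^ ![m - 1, 1, n] i := by
  fin_cases i <;> simp [C_mul, mul_assoc, map_ofNat]

lemma jacobianIdeal_blowAn (n m : ℕ) (hm : 1 ≤ m) (c : ℂ) (hc : c ≠ 0) :
    jacobianIdeal (X 1 ^ 2 + X 2 ^ (n + 1) + C c * X 0 ^ m) =
      Ideal.span (Set.range fun i => X i ^ ![m - 1, 1, n] i) := by
  simp only [jacobianIdeal, pderiv_blowAn]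
  refine Ideal.span_range_mul_of_isUnit fun i => (isUnit_iff_ne_zero.mpr ?_).map C
  fin_cases i <;> simp [hc, Nat.cast_add_one_ne_zero]
  omega

theorem milnor_number_blow_An_general (n m : ℕ) (hm : 1 ≤ m)
    (c : ℂ) (hc : c ≠ 0) :
    FiniteDimensional ℂ
      (MvPolynomial (Fin 3) ℂ ⧸ jacobianIdeal (X 1 ^ 2 + X 2 ^ (n + 1) + C c * X 0 ^ m)) ∧
    Module.finrank ℂ
      (MvPolynomial (Fin 3) ℂ ⧸ jacobianIdeal (X 1 ^ 2 + X 2 ^ (n + 1) + C c * X 0 ^ m)) =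
      n * (m - 1) := by
  rw [jacobianIdeal_blowAn n m hm c hc]
  refine ⟨Module.Finite.of_basis (basisQuotientSpanXPow _), ?_⟩
  rw [finrank_quotient_span_X_pow, Fin.prod_univ_three]
  simp [mul_comm]

/-- The blow-`Aₙ` model `x₂² + x₃^{n+1} + c·x₁^m` of blow-order `m` has Milnor
number `n·(m-1)`. -/
theorem milnor_number_blow_An (n m : ℕ) (hn : 1 ≤ n) (hm : 1 ≤ m)
    (c : ℂ) (hc : c ≠ 0) :
    FiniteDimensional ℂ
      (MvPolynomial (Fin 3) ℂ ⧸ jacobianIdeal (X 1 ^ 2 + X 2 ^ (n + 1) + C c * X 0 ^ m)) ∧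
    Module.finrank ℂ
      (MvPolynomial (Fin 3) ℂ ⧸ jacobianIdeal (X 1 ^ 2 + X 2 ^ (n + 1) + C c * X 0 ^ m)) =
      n * (m - 1) :=
  milnor_number_blow_An_general n m hm c hc
end

section
/- Let n ≥ 4, m ≥ 1 be integers and c ∈ ℂ with c ≠ 0. For g := X₂²X₃ + X₃^{n−1} + c·X₁^m ∈ MvPolynomial (Fin 3) ℂ (the blow-D_n model of blow-order m), the Milnor algebra MvPolynomial (Fin 3) ℂ / J(g) is a ℂ-vector space of dimension n·(m−1). -/
/-!
After rescaling the partial derivatives by units, the Jacobian ideal of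
`X₁²X₂ + X₂^(n-1) + c·X₀^m` is `I = (X₀^(m-1), X₁X₂, X₁² + (n-1)·X₂^(n-2))`.
Modulo `I`, every monomial reduces to a multiple of one of the `(m-1)·n` standard monomials
`X₀^i X₁` and `X₀^i X₂^k` (`i < m-1`, `k ≤ n-2`); since `X₁³` and `X₂^(n-1)` lie in `I`, the
only non-trivial rewriting is `X₁² ↦ -(n-1)·X₂^(n-2)`. The resulting normal-form map is linear,
kills `I`, and fixes the span of the standard monomials, so that span is a complement of `I`.
-/

open MvPolynomial

theorem Submodule.isCompl_of_retraction {R V : Type*} [Ring R] [AddCommGroup V] [Module R V]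
    {W U : Submodule R V} (N : V →ₗ[R] V) (h_range : ∀ v, N v ∈ U) (h_fix : ∀ x ∈ U, N x = x)
    (h_ker : ∀ w ∈ W, N w = 0) (h_sub : ∀ v, v - N v ∈ W) : IsCompl W U := by
  refine ⟨Submodule.disjoint_def.2 fun x hW hU => ?_,
    Submodule.codisjoint_iff_exists_add_eq.2 fun v =>
      ⟨_, _, h_sub v, h_range v, sub_add_cancel v _⟩⟩
  rw [← h_fix x hU, h_ker x hW]

namespace MvPolynomial

variable {σ R : Type*} [CommSemiring R]

theorem smul_monomial_one (d : σ →₀ ℕ) (r : R) : r • monomial d (1 : R) = monomial d r := by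
  rw [smul_monomial, smul_eq_mul, mul_one]

theorem monomial_mem_of_le {I : Ideal (MvPolynomial σ R)} {d₀ d : σ →₀ ℕ}
    (h : monomial d₀ 1 ∈ I) (hle : d₀ ≤ d) (r : R) : monomial d r ∈ I :=
  I.mem_of_dvd (monomial_dvd_monomial.2 ⟨Or.inr hle, one_dvd r⟩) h

end MvPolynomial

noncomputable section

namespace BlowDn

variable {K : Type*} [Field K] (a e : ℕ) (u : K)

def ideal : Ideal (MvPolynomial (Fin 3) K) :=
  Ideal.span {X 0 ^ a, X 1 * X 2, X 1 ^ 2 + C u * X 2 ^ e}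

lemma X_pow_mem_ideal : (X 0 ^ a : MvPolynomial (Fin 3) K) ∈ ideal a e u :=
  Ideal.subset_span (by simp)

lemma X_mul_X_mem_ideal : (X 1 * X 2 : MvPolynomial (Fin 3) K) ∈ ideal a e u :=
  Ideal.subset_span (by simp)

lemma add_C_mul_X_pow_mem_ideal : X 1 ^ 2 + C u * X 2 ^ e ∈ ideal a e u :=
  Ideal.subset_span (by simp)

lemma X_pow_succ_mem_ideal (hu : u ≠ 0) :
    (X 2 ^ (e + 1) : MvPolynomial (Fin 3) K) ∈ ideal a e u := by
  have hC : C u⁻¹ * C u = (1 : MvPolynomial (Fin 3) K) := by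
    rw [← C_mul, inv_mul_cancel₀ hu, C_1]
  have : (X 2 ^ (e + 1) : MvPolynomial (Fin 3) K) =
      C u⁻¹ * (X 2 * (X 1 ^ 2 + C u * X 2 ^ e) - X 1 * (X 1 * X 2)) := by
    linear_combination (-X 2 ^ (e + 1)) * hC
  rw [this]
  exact Ideal.mul_mem_left _ _ (Ideal.sub_mem _
    (Ideal.mul_mem_left _ _ (add_C_mul_X_pow_mem_ideal a e u))
    (Ideal.mul_mem_left _ _ (X_mul_X_mem_ideal a e u)))

lemma X_pow_three_mem_ideal (he : 1 ≤ e) : (X 1 ^ 3 : MvPolynomial (Fin 3) K) ∈ ideal a e u := by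
  obtain ⟨k, rfl⟩ := Nat.exists_eq_add_of_le' he
  have : (X 1 ^ 3 : MvPolynomial (Fin 3) K) =
      X 1 * (X 1 ^ 2 + C u * X 2 ^ (k + 1)) - C u * X 2 ^ k * (X 1 * X 2) := by ring
  rw [this]
  exact Ideal.sub_mem _ (Ideal.mul_mem_left _ _ (add_C_mul_X_pow_mem_ideal a _ u))
    (Ideal.mul_mem_left _ _ (X_mul_X_mem_ideal a _ u))

def normalFormMonomial (d : Fin 3 →₀ ℕ) : MvPolynomial (Fin 3) K :=
  if a ≤ d 0 then 0
  else if d 1 = 0 ∧ d 2 ≤ e ∨ d 1 = 1 ∧ d 2 = 0 then monomial d 1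
  else if d 1 = 2 ∧ d 2 = 0 then monomial (Finsupp.single 0 (d 0) + Finsupp.single 2 e) (-u)
  else 0

lemma normalFormMonomial_eq_zero {d : Fin 3 →₀ ℕ}
    (h : a ≤ d 0 ∨ 1 ≤ d 1 ∧ 1 ≤ d 2 ∨ e < d 2 ∨ 3 ≤ d 1) : normalFormMonomial a e u d = 0 := by
  unfold normalFormMonomial
  split_ifs <;> first | rfl | omega

lemma monomial_sub_normalFormMonomial_mem (he : 1 ≤ e) (hu : u ≠ 0) (d : Fin 3 →₀ ℕ) :
    monomial d 1 - normalFormMonomial a e u d ∈ ideal a e u := by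
  unfold normalFormMonomial
  split_ifs with h0 hstd hred
  · rw [sub_zero]
    refine monomial_mem_of_le ?_ (Finsupp.single_le_iff.2 h0) 1
    simpa [X_pow_eq_monomial] using X_pow_mem_ideal a e u
  · rw [sub_self]
    exact zero_mem _
  · have hd : d = Finsupp.single 0 (d 0) + Finsupp.single 1 2 := by
      ext i; fin_cases i <;> simp [hred]
    have : monomial d 1 - monomial (Finsupp.single 0 (d 0) + Finsupp.single 2 e) (-u) =
        monomial (Finsupp.single 0 (d 0)) 1 * (X 1 ^ 2 + C u * X 2 ^ e) := by
      rw [hd, mul_add, X_pow_eq_monomial, C_mul_X_pow_eq_monomial, monomial_mul, monomial_mul,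
        one_mul, one_mul, map_neg, sub_neg_eq_add]
      simp
    rw [this]
    exact Ideal.mul_mem_left _ _ (add_C_mul_X_pow_mem_ideal a e u)
  · rw [sub_zero]
    rcases (by omega : 1 ≤ d 1 ∧ 1 ≤ d 2 ∨ e < d 2 ∨ 3 ≤ d 1) with h | h | h
    · refine monomial_mem_of_le (d₀ := Finsupp.single 1 1 + Finsupp.single 2 1) ?_ ?_ 1
      · simpa [X, monomial_mul] using X_mul_X_mem_ideal a e u
      · intro i; fin_cases i <;> simp <;> omega
    · refine monomial_mem_of_le ?_ (Finsupp.single_le_iff.2 h) 1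
      simpa [X_pow_eq_monomial] using X_pow_succ_mem_ideal a e u hu
    · refine monomial_mem_of_le ?_ (Finsupp.single_le_iff.2 h) 1
      simpa [X_pow_eq_monomial] using X_pow_three_mem_ideal a e u he

def normalForm : MvPolynomial (Fin 3) K →ₗ[K] MvPolynomial (Fin 3) K :=
  (basisMonomials (Fin 3) K).constr K (normalFormMonomial a e u)

lemma normalForm_monomial (d : Fin 3 →₀ ℕ) (r : K) :
    normalForm a e u (monomial d r) = r • normalFormMonomial a e u d := by
  rw [← smul_monomial_one, map_smul]
  exact congrArg _ ((basisMonomials (Fin 3) K).constr_basis K _ d)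

lemma normalForm_monomial_mul_add_C_mul_X_pow (he : 1 ≤ e) (d : Fin 3 →₀ ℕ) :
    normalForm a e u (monomial d 1 * (X 1 ^ 2 + C u * X 2 ^ e)) = 0 := by
  rw [mul_add, X_pow_eq_monomial, C_mul_X_pow_eq_monomial, monomial_mul, monomial_mul,
    one_mul, one_mul, map_add, normalForm_monomial, normalForm_monomial, one_smul]
  by_cases hd : d 0 < a ∧ d 1 = 0 ∧ d 2 = 0
  · have hd' : d + Finsupp.single 2 e = Finsupp.single 0 (d 0) + Finsupp.single 2 e := by
      ext i; fin_cases i <;> simp [hd]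
    unfold normalFormMonomial
    simp [hd, hd', smul_monomial, not_le.2 hd.1]
  · rw [normalFormMonomial_eq_zero, normalFormMonomial_eq_zero, smul_zero, add_zero] <;>
      simp <;> omega

lemma sub_normalForm_mem (he : 1 ≤ e) (hu : u ≠ 0) (p : MvPolynomial (Fin 3) K) :
    p - normalForm a e u p ∈ ideal a e u := by
  induction p using MvPolynomial.induction_on' with
  | monomial d r =>
    rw [normalForm_monomial, ← smul_monomial_one, ← smul_sub, smul_eq_C_mul]
    exact Ideal.mul_mem_left _ _ (monomial_sub_normalFormMonomial_mem a e u he hu d)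
  | add p q hp hq =>
    rw [map_add, add_sub_add_comm]
    exact Ideal.add_mem _ hp hq

lemma normalForm_mul_eq_zero {g : MvPolynomial (Fin 3) K}
    (h : ∀ d, normalForm a e u (monomial d 1 * g) = 0) (q : MvPolynomial (Fin 3) K) :
    normalForm a e u (q * g) = 0 := by
  induction q using MvPolynomial.induction_on' with
  | monomial d r => rw [← smul_monomial_one, smul_mul_assoc, map_smul, h, smul_zero]
  | add p q hp hq => rw [add_mul, map_add, hp, hq, add_zero]

lemma normalForm_eq_zero_of_mem (he : 1 ≤ e) {p : MvPolynomial (Fin 3) K}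
    (hp : p ∈ ideal a e u) : normalForm a e u p = 0 := by
  suffices ∀ q, normalForm a e u (q * p) = 0 by simpa using this 1
  induction hp using Submodule.span_induction with
  | mem g hg =>
    refine normalForm_mul_eq_zero a e u fun d => ?_
    rcases hg with rfl | rfl | rfl
    · rw [X_pow_eq_monomial, monomial_mul, one_mul, normalForm_monomial,
        normalFormMonomial_eq_zero a e u (by simp), smul_zero]
    · rw [X, X, monomial_mul, monomial_mul, one_mul, one_mul, ← add_assoc, normalForm_monomial,
        normalFormMonomial_eq_zero a e u (by simp), smul_zero]
    · exact normalForm_monomial_mul_add_C_mul_X_pow a e u he d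
  | zero => simp
  | add x y _ _ hx hy => intro q; rw [mul_add, map_add, hx, hy, add_zero]
  | smul c x _ hx => intro q; rw [smul_eq_mul, ← mul_assoc, hx]

def standardExponent : ℕ × ℕ → Fin 3 →₀ ℕ
  | (i, 0) => Finsupp.single 0 i + Finsupp.single 1 1
  | (i, k + 1) => Finsupp.single 0 i + Finsupp.single 2 k

def standardExponents : Finset (Fin 3 →₀ ℕ) :=
  (Finset.range a ×ˢ Finset.range (e + 2)).image standardExponent

lemma standardExponent_injective : Function.Injective standardExponent := by
  intro p q h
  have h0 := DFunLike.congr_fun h 0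
  have h1 := DFunLike.congr_fun h 1
  have h2 := DFunLike.congr_fun h 2
  rcases p with ⟨i, _ | k⟩ <;> rcases q with ⟨i', _ | k'⟩ <;>
    simp [standardExponent] at h0 h1 h2 ⊢ <;> omega

lemma card_standardExponents : (standardExponents a e).card = a * (e + 2) := by
  rw [standardExponents, Finset.card_image_of_injective _ standardExponent_injective,
    Finset.card_product, Finset.card_range, Finset.card_range]

lemma normalFormMonomial_mem_restrictSupport (d : Fin 3 →₀ ℕ) :
    normalFormMonomial a e u d ∈ restrictSupport K (standardExponents a e : Set (Fin 3 →₀ ℕ)) := by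
  unfold normalFormMonomial
  split_ifs with h0 hstd hred
  · exact zero_mem _
  · refine (monomial_mem_restrictSupport K).2 (Or.inl (Finset.mem_image.2 ?_))
    rcases hstd with ⟨h1, h2⟩ | ⟨h1, h2⟩
    · refine ⟨(d 0, d 2 + 1), by simp; omega, ?_⟩
      ext i; fin_cases i <;> simp [standardExponent, h1]
    · refine ⟨(d 0, 0), by simp; omega, ?_⟩
      ext i; fin_cases i <;> simp [standardExponent, h1, h2]
  · exact (monomial_mem_restrictSupport K).2 (Or.inl (Finset.mem_image.2
      ⟨(d 0, e + 1), by simp; omega, by simp [standardExponent]⟩))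
  · exact zero_mem _

lemma normalForm_mem_restrictSupport (p : MvPolynomial (Fin 3) K) :
    normalForm a e u p ∈ restrictSupport K (standardExponents a e : Set (Fin 3 →₀ ℕ)) := by
  induction p using MvPolynomial.induction_on' with
  | monomial d r =>
    rw [normalForm_monomial]
    exact Submodule.smul_mem _ _ (normalFormMonomial_mem_restrictSupport a e u d)
  | add p q hp hq => rw [map_add]; exact add_mem hp hq

lemma normalFormMonomial_standardExponent {i k : ℕ} (hi : i < a) (hk : k < e + 2) :
    normalFormMonomial a e u (standardExponent (i, k)) =
      monomial (standardExponent (i, k)) 1 := by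
  unfold normalFormMonomial
  rcases k with _ | k <;> simp [standardExponent, not_le.2 hi]
  omega

lemma normalForm_eq_self {p : MvPolynomial (Fin 3) K}
    (hp : p ∈ restrictSupport K (standardExponents a e : Set (Fin 3 →₀ ℕ))) :
    normalForm a e u p = p := by
  rw [restrictSupport_eq_span] at hp
  induction hp using Submodule.span_induction with
  | mem p hp =>
    obtain ⟨_, hd, rfl⟩ := hp
    obtain ⟨⟨i, k⟩, hik, rfl⟩ := Finset.mem_image.1 hd
    rw [Finset.mem_product, Finset.mem_range, Finset.mem_range] at hik
    rw [normalForm_monomial, one_smul, normalFormMonomial_standardExponent a e u hik.1 hik.2]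
  | zero => exact map_zero _
  | add p q _ _ hp hq => rw [map_add, hp, hq]
  | smul c p _ hp => rw [map_smul, hp]

lemma isCompl_ideal_restrictSupport (he : 1 ≤ e) (hu : u ≠ 0) :
    IsCompl ((ideal a e u).restrictScalars K)
      (restrictSupport K (standardExponents a e : Set (Fin 3 →₀ ℕ))) :=
  Submodule.isCompl_of_retraction (normalForm a e u) (normalForm_mem_restrictSupport a e u)
    (fun _ => normalForm_eq_self a e u) (fun _ => normalForm_eq_zero_of_mem a e u he)
    (sub_normalForm_mem a e u he hu)

def quotientEquivRestrictSupport (he : 1 ≤ e) (hu : u ≠ 0) :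
    (MvPolynomial (Fin 3) K ⧸ ideal a e u) ≃ₗ[K]
      restrictSupport K (standardExponents a e : Set (Fin 3 →₀ ℕ)) :=
  (Submodule.Quotient.restrictScalarsEquiv K (ideal a e u)).symm.trans
    (Submodule.quotientEquivOfIsCompl _ _ (isCompl_ideal_restrictSupport a e u he hu))

theorem finiteDimensional_quotient_ideal (he : 1 ≤ e) (hu : u ≠ 0) :
    FiniteDimensional K (MvPolynomial (Fin 3) K ⧸ ideal a e u) :=
  have := Module.Finite.of_basis
    (basisRestrictSupport K (standardExponents a e : Set (Fin 3 →₀ ℕ)))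
  Module.Finite.equiv (quotientEquivRestrictSupport a e u he hu).symm

theorem finrank_quotient_ideal (he : 1 ≤ e) (hu : u ≠ 0) :
    Module.finrank K (MvPolynomial (Fin 3) K ⧸ ideal a e u) = a * (e + 2) := by
  rw [(quotientEquivRestrictSupport a e u he hu).finrank_eq,
    Module.finrank_eq_nat_card_basis (basisRestrictSupport K _), Nat.card_coe_set_eq,
    Set.ncard_coe_finset, card_standardExponents]

end BlowDn

end

lemma jacobianIdeal_eq_blowDn_ideal (n m : ℕ) (hm : 1 ≤ m) (c : ℂ) (hc : c ≠ 0) :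
    jacobianIdeal (X 1 ^ 2 * X 2 + X 2 ^ (n - 1) + C c * X 0 ^ m) =
      BlowDn.ideal (m - 1) (n - 2) ((n - 1 : ℕ) : ℂ) := by
  set g : MvPolynomial (Fin 3) ℂ := X 1 ^ 2 * X 2 + X 2 ^ (n - 1) + C c * X 0 ^ m
  have h0 : pderiv 0 g = C (c * m) * X 0 ^ (m - 1) := by simp [g]; ring
  have h1 : pderiv 1 g = C 2 * (X 1 * X 2) := by simp [g, ← map_ofNat C]; ring
  have h2 : pderiv 2 g = X 1 ^ 2 + C ((n - 1 : ℕ) : ℂ) * X 2 ^ (n - 2) := by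
    simp [g, Nat.sub_sub]
  have hrange : Set.range (pderiv · g) = {pderiv 0 g, pderiv 1 g, pderiv 2 g} := by
    ext; simp [Fin.exists_fin_succ, eq_comm]
  have isUnit_C {x : ℂ} (hx : x ≠ 0) : IsUnit (C x : MvPolynomial (Fin 3) ℂ) := hx.isUnit.map C
  rw [jacobianIdeal, hrange, h0, h1, h2, BlowDn.ideal, Ideal.span_insert, Ideal.span_insert,
    Ideal.span_insert, Ideal.span_insert, Ideal.span_singleton_mul_left_unit,
    Ideal.span_singleton_mul_left_unit]
  · exact isUnit_C two_ne_zero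
  · exact isUnit_C (mul_ne_zero hc (Nat.cast_ne_zero.2 (by omega)))

/-- The blow-`Dₙ` model `x₂²x₃ + x₃^{n-1} + c·x₁^m` of blow-order `m` has Milnor
number `n·(m-1)`. -/
theorem milnor_number_blow_Dn (n m : ℕ) (hn : 4 ≤ n) (hm : 1 ≤ m)
    (c : ℂ) (hc : c ≠ 0) :
    FiniteDimensional ℂ
      (MvPolynomial (Fin 3) ℂ ⧸
        jacobianIdeal (X 1 ^ 2 * X 2 + X 2 ^ (n - 1) + C c * X 0 ^ m)) ∧
    Module.finrank ℂ
      (MvPolynomial (Fin 3) ℂ ⧸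
        jacobianIdeal (X 1 ^ 2 * X 2 + X 2 ^ (n - 1) + C c * X 0 ^ m)) =
      n * (m - 1) := by
  rw [jacobianIdeal_eq_blowDn_ideal n m hm c hc]
  have he : 1 ≤ n - 2 := by omega
  have hu : ((n - 1 : ℕ) : ℂ) ≠ 0 := Nat.cast_ne_zero.2 (by omega)
  refine ⟨BlowDn.finiteDimensional_quotient_ideal _ _ _ he hu, ?_⟩
  rw [BlowDn.finrank_quotient_ideal _ _ _ he hu, Nat.sub_add_cancel (by omega : 2 ≤ n), mul_comm]
end

section
/- Let m ≥ 1 be an integer and c ∈ ℂ with c ≠ 0. For g := X₂³ + X₂X₃³ + c·X₁^m ∈ MvPolynomial (Fin 3) ℂ (the blow-E₇ model of blow-order m), the Milnor algebra MvPolynomial (Fin 3) ℂ / J(g) is a ℂ-vector space of dimension 7·(m−1). -/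
open MvPolynomial

/-!
Dividing the partial derivatives by units, the Jacobian ideal is `(xⁿ, 3y² + z³, yz²)` with
`n = m - 1`. Modulo this ideal the `7n` monomials `xⁱ·b` (`i < n`, `b ∈ {1, y, z, yz, z², y², y²z}`)
span: `xⁿ = 0`, and multiplication by `y` or `z` maps each `b` to a multiple of another one or to
`0` (for `y·y² = 0` one needs `3y³ = y(3y² + z³) - z(yz²)` and `3 ≠ 0`). Conversely, letting `x` act
on `(K[x]/(xⁿ))⁷` as the scalar `x` and `y`, `z` through the (commuting) multiplication matrices of
`K[y, z]/(3y² + z³, yz²)` gives a representation of the quotient in which `xⁱ·bⱼ` sends the first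
basis vector to `xⁱ·eⱼ`; so the quotient maps onto a space of dimension `7n`.
-/

open scoped Polynomial

theorem MvPolynomial.algHom_mem_of_mul_X_mem {R σ A : Type*} [CommSemiring R] [CommSemiring A]
    [Algebra R A] (f : MvPolynomial σ R →ₐ[R] A) {W : Submodule R A} (h1 : 1 ∈ W)
    (hX : ∀ i, ∀ w ∈ W, f (X i) * w ∈ W) (p : MvPolynomial σ R) : f p ∈ W := by
  induction p using MvPolynomial.induction_on with
  | C a => simpa [Algebra.algebraMap_eq_smul_one] using W.smul_mem a h1
  | add p q hp hq => simpa using W.add_mem hp hq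
  | mul_X p i hp => simpa [mul_comm] using hX i _ hp

abbrev TruncatedPolynomial (R : Type*) [CommRing R] (n : ℕ) : Type _ :=
  AdjoinRoot (Polynomial.X ^ n : R[X])

instance (R : Type*) [CommRing R] (n : ℕ) : Module.Finite R (TruncatedPolynomial R n) :=
  (AdjoinRoot.powerBasis' (Polynomial.monic_X_pow n)).finite

theorem finrank_truncatedPolynomial (K : Type*) [Field K] (n : ℕ) :
    Module.finrank K (TruncatedPolynomial K n) = n := by
  rw [(AdjoinRoot.powerBasis' (Polynomial.monic_X_pow n)).finrank]
  simp

noncomputable section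

namespace BlowE7

section Matrices

open Matrix

variable (R : Type*) [CommRing R]

/-- Column `j` of `e7MulY` (resp. `e7MulZ`) expresses `y` (resp. `z`) times the `j`-th element of
`1, y, z, yz, z², y², y²z` in this basis of `K[y, z]/(3y² + z³, yz²)`. -/
def e7MulY : Matrix (Fin 7) (Fin 7) R :=
  single 1 0 1 + single 5 1 1 + single 3 2 1 + single 6 3 1

def e7MulZ : Matrix (Fin 7) (Fin 7) R :=
  single 2 0 1 + single 3 1 1 + single 4 2 1 + single 5 4 (-3) + single 6 5 1

theorem commute_e7MulY_e7MulZ : Commute (e7MulY R) (e7MulZ R) := by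
  simp +decide [Commute, SemiconjBy, e7MulY, e7MulZ, add_mul, mul_add, single_mul_single_same,
    single_mul_single_of_ne]

theorem e7MulY_mul_e7MulZ_sq : e7MulY R * e7MulZ R ^ 2 = 0 := by
  simp +decide [e7MulY, e7MulZ, sq, add_mul, mul_add, single_mul_single_same,
    single_mul_single_of_ne]

theorem three_mul_e7MulY_sq_add_e7MulZ_pow_three : 3 * e7MulY R ^ 2 + e7MulZ R ^ 3 = 0 := by
  rw [← diagonal_ofNat, ← smul_eq_diagonal_mul]
  simp +decide [e7MulY, e7MulZ, pow_succ, add_mul, mul_add, single_mul_single_same,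
    single_mul_single_of_ne, smul_single, ← single_neg]
  abel

end Matrices

variable (K : Type*) [Field K] (n : ℕ)

def ideal : Ideal (MvPolynomial (Fin 3) K) :=
  Ideal.span {X 0 ^ n, 3 * X 1 ^ 2 + X 2 ^ 3, X 1 * X 2 ^ 2}

def e7Monomial : Fin 7 → MvPolynomial (Fin 3) K :=
  ![1, X 1, X 2, X 1 * X 2, X 2 ^ 2, X 1 ^ 2, X 1 ^ 2 * X 2]

section LowerBound

open Matrix

def operators : Fin 3 → Matrix (Fin 7) (Fin 7) (TruncatedPolynomial K n) :=
  ![algebraMap (TruncatedPolynomial K n) _ (AdjoinRoot.root (Polynomial.X ^ n)), e7MulY _,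
    e7MulZ _]

theorem commute_operators (i j : Fin 3) : Commute (operators K n i) (operators K n j) := by
  have hx (M : Matrix (Fin 7) (Fin 7) (TruncatedPolynomial K n)) :=
    Algebra.commute_algebraMap_left (AdjoinRoot.root (Polynomial.X ^ n : K[X])) M
  fin_cases i <;> fin_cases j
  exacts [.refl _, hx _, hx _, (hx _).symm, .refl _, commute_e7MulY_e7MulZ _, (hx _).symm,
    (commute_e7MulY_e7MulZ _).symm, .refl _]

instance : IsMulCommutative (Algebra.adjoin K (Set.range (operators K n))) :=
  Algebra.isMulCommutative_adjoin K <| by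
    rintro _ ⟨i, rfl⟩ _ ⟨j, rfl⟩
    exact (commute_operators K n i j).eq

open scoped IsMulCommutative in
def rep : MvPolynomial (Fin 3) K →ₐ[K] Matrix (Fin 7) (Fin 7) (TruncatedPolynomial K n) :=
  (Algebra.adjoin K (Set.range (operators K n))).val.comp
    (aeval fun i => ⟨operators K n i, Algebra.subset_adjoin ⟨i, rfl⟩⟩)

theorem rep_X (i : Fin 3) : rep K n (X i) = operators K n i := by
  simp [rep]

theorem rep_X_one : rep K n (X 1) = e7MulY _ := rep_X K n 1

theorem rep_X_two : rep K n (X 2) = e7MulZ _ := rep_X K n 2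

theorem ideal_le_ker_rep : ideal K n ≤ RingHom.ker (rep K n) := by
  rw [ideal, Ideal.span_le]
  rintro p (rfl | rfl | rfl) <;>
    simp only [SetLike.mem_coe, RingHom.mem_ker, map_add, map_mul, map_pow, map_ofNat, rep_X]
  · rw [operators, Matrix.cons_val_zero, ← map_pow, ← AdjoinRoot.mk_X, ← map_pow,
      AdjoinRoot.mk_self, map_zero]
  · exact three_mul_e7MulY_sq_add_e7MulZ_pow_three _
  · exact e7MulY_mul_e7MulZ_sq _

def column : (MvPolynomial (Fin 3) K ⧸ ideal K n) →ₗ[K] Fin 7 → TruncatedPolynomial K n :=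
  (mulVecBilin K (TruncatedPolynomial K n)).flip (Pi.single 0 1) ∘ₗ
    (Ideal.Quotient.liftₐ _ (rep K n) fun _ ha => ideal_le_ker_rep K n ha).toLinearMap

theorem column_mk (p : MvPolynomial (Fin 3) K) :
    column K n (Ideal.Quotient.mk _ p) = rep K n p *ᵥ Pi.single 0 1 :=
  rfl

theorem rep_e7Monomial_mulVec (j : Fin 7) :
    rep K n (e7Monomial K j) *ᵥ Pi.single 0 1 = Pi.single j 1 := by
  fin_cases j <;>
    simp only [e7Monomial, Fin.mk_zero, Fin.mk_one, Fin.reduceFinMk, cons_val, map_mul, map_one,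
      rep_X_one, rep_X_two, sq, ← mulVec_mulVec, one_mulVec] <;>
    simp [e7MulY, e7MulZ, add_mulVec, single_mulVec, -mulVec_single] <;>
    rfl

theorem rep_aeval_X_zero (p : K[X]) :
    rep K n (Polynomial.aeval (X 0) p) =
      algebraMap (TruncatedPolynomial K n) _ (AdjoinRoot.mk _ p) := by
  rw [← Polynomial.aeval_algHom_apply, rep_X]
  simp [operators, Polynomial.aeval_algebraMap_apply, AdjoinRoot.aeval_eq]

theorem column_surjective : Function.Surjective (column K n) := by
  intro w
  choose P hP using fun j => AdjoinRoot.mk_surjective (w j)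
  refine ⟨Ideal.Quotient.mk _ (∑ j, Polynomial.aeval (X 0) (P j) * e7Monomial K j), ?_⟩
  rw [column_mk]
  simp only [map_sum, map_mul, sum_mulVec, rep_aeval_X_zero, hP, ← Algebra.smul_def, smul_mulVec,
    rep_e7Monomial_mulVec, ← Pi.single_smul, smul_eq_mul, mul_one, Finset.univ_sum_single]

theorem mul_le_finrank_quotient [FiniteDimensional K (MvPolynomial (Fin 3) K ⧸ ideal K n)] :
    7 * n ≤ Module.finrank K (MvPolynomial (Fin 3) K ⧸ ideal K n) :=
  calc 7 * n = Module.finrank K (Fin 7 → TruncatedPolynomial K n) := by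
        rw [Module.finrank_pi_fintype]
        simp [finrank_truncatedPolynomial]
    _ ≤ _ := LinearMap.finrank_le_finrank_of_surjective (column_surjective K n)

end LowerBound

section UpperBound

local notation "π" => Ideal.Quotient.mk (ideal K n)

theorem mk_X_zero_pow : π (X 0) ^ n = 0 := by
  rw [← map_pow, Ideal.Quotient.eq_zero_iff_mem]
  exact Ideal.subset_span (by simp)

theorem three_mul_mk_X_one_sq_add_mk_X_two_pow_three : 3 * π (X 1) ^ 2 + π (X 2) ^ 3 = 0 := by
  rw [← map_ofNat π 3, ← map_pow, ← map_pow, ← map_mul, ← map_add, Ideal.Quotient.eq_zero_iff_mem]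
  exact Ideal.subset_span (by simp)

theorem mk_X_one_mul_mk_X_two_sq : π (X 1) * π (X 2) ^ 2 = 0 := by
  rw [← map_pow, ← map_mul, Ideal.Quotient.eq_zero_iff_mem]
  exact Ideal.subset_span (by simp)

theorem mk_X_one_pow_three [NeZero (3 : K)] : π (X 1) ^ 3 = 0 := by
  have h3 : IsUnit (3 : MvPolynomial (Fin 3) K ⧸ ideal K n) := by
    rw [← map_ofNat (algebraMap K (MvPolynomial (Fin 3) K ⧸ ideal K n)) 3]
    exact (IsUnit.mk0 _ (NeZero.ne 3)).map _
  refine h3.mul_right_eq_zero.mp ?_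
  linear_combination π (X 1) * three_mul_mk_X_one_sq_add_mk_X_two_pow_three K n -
    π (X 2) * mk_X_one_mul_mk_X_two_sq K n

theorem mk_X_one_mul_e7Monomial [NeZero (3 : K)] (j : Fin 7) :
    π (X 1 * e7Monomial K j) = ∑ k, e7MulY K k j • π (e7Monomial K k) := by
  fin_cases j <;> simp [e7Monomial, e7MulY, Matrix.single_apply]
  · ring
  · ring
  · exact mk_X_one_mul_mk_X_two_sq K n
  · linear_combination mk_X_one_pow_three K n
  · linear_combination π (X 2) * mk_X_one_pow_three K n

theorem mk_X_two_mul_e7Monomial (j : Fin 7) :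
    π (X 2 * e7Monomial K j) = ∑ k, e7MulZ K k j • π (e7Monomial K k) := by
  fin_cases j <;> simp [e7Monomial, e7MulZ, Matrix.single_apply, ofNat_smul_eq_nsmul]
  · ring
  · ring
  · linear_combination mk_X_one_mul_mk_X_two_sq K n
  · linear_combination three_mul_mk_X_one_sq_add_mk_X_two_pow_three K n
  · ring
  · linear_combination π (X 1) * mk_X_one_mul_mk_X_two_sq K n

theorem mk_X_mul_e7Monomial_mem_span [NeZero (3 : K)] {i : Fin 3} (hi : i ≠ 0) (j : Fin 7) :
    π (X i * e7Monomial K j) ∈ Submodule.span K (Set.range fun k => π (e7Monomial K k)) := by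
  have hsum (c : Fin 7 → K) :
      ∑ k, c k • π (e7Monomial K k) ∈ Submodule.span K (Set.range fun k => π (e7Monomial K k)) :=
    Submodule.sum_mem _ fun k _ => Submodule.smul_mem _ _ (Submodule.subset_span ⟨k, rfl⟩)
  fin_cases i
  · exact absurd rfl hi
  · change π (X 1 * e7Monomial K j) ∈ _
    rw [mk_X_one_mul_e7Monomial]
    exact hsum _
  · change π (X 2 * e7Monomial K j) ∈ _
    rw [mk_X_two_mul_e7Monomial]
    exact hsum _

def monomial : Fin n × Fin 7 → MvPolynomial (Fin 3) K ⧸ ideal K n :=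
  fun ij => π (X 0) ^ (ij.1 : ℕ) * π (e7Monomial K ij.2)

theorem mk_X_zero_pow_mul_mem_span (i : ℕ) {a : MvPolynomial (Fin 3) K ⧸ ideal K n}
    (ha : a ∈ Submodule.span K (Set.range fun k => π (e7Monomial K k))) :
    π (X 0) ^ i * a ∈ Submodule.span K (Set.range (monomial K n)) := by
  refine (Submodule.span_le (p := (Submodule.span K _).comap
    (LinearMap.mulLeft K (π (X 0) ^ i)))).mpr ?_ ha
  rintro _ ⟨k, rfl⟩
  by_cases hi : i < n
  · exact Submodule.subset_span ⟨(⟨i, hi⟩, k), rfl⟩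
  · simp [pow_eq_zero_of_le (not_lt.mp hi) (mk_X_zero_pow K n)]

theorem span_monomial_eq_top [NeZero (3 : K)] :
    Submodule.span K (Set.range (monomial K n)) = ⊤ := by
  refine eq_top_iff.mpr fun w _ => ?_
  obtain ⟨p, rfl⟩ := Ideal.Quotient.mkₐ_surjective K _ w
  refine MvPolynomial.algHom_mem_of_mul_X_mem _ ?_ (fun i w hw => ?_) p
  · simpa [e7Monomial] using
      mk_X_zero_pow_mul_mem_span K n 0 (a := π (e7Monomial K 0)) (Submodule.subset_span ⟨0, rfl⟩)
  refine (Submodule.span_le (p := (Submodule.span K _).comap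
    (LinearMap.mulLeft K (π (X i))))).mpr ?_ hw
  rintro _ ⟨⟨k, j⟩, rfl⟩
  rw [SetLike.mem_coe, Submodule.mem_comap, LinearMap.mulLeft_apply, monomial]
  by_cases hi : i = 0
  · rw [hi, ← mul_assoc, ← pow_succ']
    exact mk_X_zero_pow_mul_mem_span K n _ (a := π (e7Monomial K j))
      (Submodule.subset_span ⟨j, rfl⟩)
  · rw [mul_left_comm, ← map_mul]
    exact mk_X_zero_pow_mul_mem_span K n _ (mk_X_mul_e7Monomial_mem_span K n hi j)

instance [NeZero (3 : K)] : FiniteDimensional K (MvPolynomial (Fin 3) K ⧸ ideal K n) :=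
  ⟨span_monomial_eq_top K n ▸ Submodule.fg_span (Set.finite_range _)⟩

theorem finrank_quotient_le [NeZero (3 : K)] :
    Module.finrank K (MvPolynomial (Fin 3) K ⧸ ideal K n) ≤ 7 * n := by
  rw [← finrank_top, ← span_monomial_eq_top K n, mul_comm]
  simpa [Set.finrank] using finrank_range_le_card (R := K) (monomial K n)

end UpperBound

theorem finrank_quotient [NeZero (3 : K)] :
    Module.finrank K (MvPolynomial (Fin 3) K ⧸ ideal K n) = 7 * n :=
  (finrank_quotient_le K n).antisymm (mul_le_finrank_quotient K n)

theorem jacobianIdeal_eq {m : ℕ} (hm : 1 ≤ m) {c : ℂ} (hc : c ≠ 0) :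
    jacobianIdeal (X 1 ^ 3 + X 1 * X 2 ^ 3 + C c * X 0 ^ m) = ideal ℂ (m - 1) := by
  have hpderiv : (fun i => pderiv i (X 1 ^ 3 + X 1 * X 2 ^ 3 + C c * X 0 ^ m)) =
      ![C (c * m) * X 0 ^ (m - 1), 3 * X 1 ^ 2 + X 2 ^ 3, 3 * (X 1 * X 2 ^ 2)] := by
    funext i
    fin_cases i <;> simp [pderiv_X] <;> ring
  have hcm : IsUnit (C (c * m) : MvPolynomial (Fin 3) ℂ) :=
    (IsUnit.mk0 _ (mul_ne_zero hc (Nat.cast_ne_zero.mpr (by omega)))).map C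
  have h3 : IsUnit (3 : MvPolynomial (Fin 3) ℂ) := by
    rw [← map_ofNat C 3]
    exact (IsUnit.mk0 _ three_ne_zero).map C
  rw [jacobianIdeal, hpderiv, ideal]
  simp only [Matrix.range_cons, Matrix.range_empty, Set.union_empty, Set.singleton_union]
  rw [Ideal.span_insert, Ideal.span_singleton_mul_left_unit hcm, Ideal.span_insert,
    Ideal.span_singleton_mul_left_unit h3, ← Ideal.span_insert, ← Ideal.span_insert]

end BlowE7

end

/-- The blow-`E₇` model `x₂³ + x₂x₃³ + c·x₁^m` of blow-order `m` has Milnor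
number `7·(m-1)`. -/
theorem milnor_number_blow_E7 (m : ℕ) (hm : 1 ≤ m) (c : ℂ) (hc : c ≠ 0) :
    FiniteDimensional ℂ
      (MvPolynomial (Fin 3) ℂ ⧸
        jacobianIdeal (X 1 ^ 3 + X 1 * X 2 ^ 3 + C c * X 0 ^ m)) ∧
    Module.finrank ℂ
      (MvPolynomial (Fin 3) ℂ ⧸
        jacobianIdeal (X 1 ^ 3 + X 1 * X 2 ^ 3 + C c * X 0 ^ m)) =
      7 * (m - 1) := by
  rw [BlowE7.jacobianIdeal_eq hm hc]
  exact ⟨inferInstance, BlowE7.finrank_quotient ℂ (m - 1)⟩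
end
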